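/- Let ρ > 0, θ > 0, h > 0, E′ > 0, and v ∈ ℝ with v² < 1. Set γ = 1/√(1−v²) and c_s = √(θ(1+E′)/(hE′)). Define the 3×3 matrices R̃ = [[1, 1, 1], [(v−c_s)hγ, (h−θ(1+E′))γv, (v+c_s)hγ], [(1−vc_s)hγ, (h−θ(1+E′))γ, (1+vc_s)hγ]] and D̃ = diag(d₁, d₂, d₃) with d₁ = γ(ρE′/(2(1+E′)) − ρθv/(2c_s h)), d₂ = ργ/(1+E′), d₃ = γ(ρE′/(2(1+E′)) + ρθv/(2c_s h)). Then R̃ D̃ R̃ᵀ = M, where M is the symmetric matrix M = [[ργ, ρhγ²v, ρ(hγ² − θ)], [ρhγ²v, ργ³(θ²v²(1+E′) + θh + h²v²), ργ³v(θ²(1+E′) + h² + θhv²)], [ρ(hγ² − θ), ργ³v(θ²(1+E′) + h² + θhv²), ργ³(θ²(1+E′) + h² − 2θh + 3θhv²)]]. (In the application h = 1+e(θ)+θ and E′ = e′(θ), and M equals the Jacobian ∂U/∂W of the conservative variables with respect to the entropy variables; hence R = R̃√(D̃) satisfies ∂U/∂W = RRᵀ.) -/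
import Mathlib


open Matrix

set_option maxHeartbeats 1000000

/-- The eigenvector-scaling identity for the 1D RHD dissipation matrix with
general Synge-type EOS: `R̃ D̃ R̃ᵀ = ∂U/∂W`, where `R̃` is the right eigenvector
matrix of the flux Jacobian, `D̃ = diag(d₁,d₂,d₃)` are the scaling coefficients,
and `M = ∂U/∂W` is the Jacobian of the conservative variables with respect to the
entropy variables (here `E′` stands for `e′(θ)` and `c_s² = θ(1+E′)/(hE′)`). -/
theorem stmt12 (ρ θ h E' v : ℝ)
    (hρ : 0 < ρ) (hθ : 0 < θ) (hh : 0 < h) (hE : 0 < E') (hv : v ^ 2 < 1) :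
    let γ : ℝ := 1 / Real.sqrt (1 - v ^ 2)
    let cs : ℝ := Real.sqrt (θ * (1 + E') / (h * E'))
    let R : Matrix (Fin 3) (Fin 3) ℝ :=
      !![1, 1, 1;
         (v - cs) * h * γ, (h - θ * (1 + E')) * γ * v, (v + cs) * h * γ;
         (1 - v * cs) * h * γ, (h - θ * (1 + E')) * γ, (1 + v * cs) * h * γ]
    let D : Matrix (Fin 3) (Fin 3) ℝ :=
      Matrix.diagonal ![γ * (ρ * E' / (2 * (1 + E')) - ρ * θ * v / (2 * cs * h)),
        ρ * γ / (1 + E'),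
        γ * (ρ * E' / (2 * (1 + E')) + ρ * θ * v / (2 * cs * h))]
    let M : Matrix (Fin 3) (Fin 3) ℝ :=
      !![ρ * γ, ρ * h * γ ^ 2 * v, ρ * (h * γ ^ 2 - θ);
         ρ * h * γ ^ 2 * v,
           ρ * γ ^ 3 * (θ ^ 2 * v ^ 2 * (1 + E') + θ * h + h ^ 2 * v ^ 2),
           ρ * γ ^ 3 * v * (θ ^ 2 * (1 + E') + h ^ 2 + θ * h * v ^ 2);
         ρ * (h * γ ^ 2 - θ),
           ρ * γ ^ 3 * v * (θ ^ 2 * (1 + E') + h ^ 2 + θ * h * v ^ 2),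
           ρ * γ ^ 3 * (θ ^ 2 * (1 + E') + h ^ 2 - 2 * θ * h + 3 * θ * h * v ^ 2)]
    R * D * Rᵀ = M := by
  intro γ cs R D M
  have h1 : (0:ℝ) < 1 - v ^ 2 := by linarith
  have key2 : γ ^ 2 * (1 - v ^ 2) = 1 := by
    have hs : Real.sqrt (1 - v ^ 2) ^ 2 = 1 - v ^ 2 := Real.sq_sqrt h1.le
    have hne : Real.sqrt (1 - v ^ 2) ≠ 0 := by positivity
    show (1 / Real.sqrt (1 - v ^ 2)) ^ 2 * (1 - v ^ 2) = 1
    rw [div_pow, one_pow, hs]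
    field_simp
  have key1 : cs ^ 2 * (h * E') = θ * (1 + E') := by
    have harg : (0:ℝ) ≤ θ * (1 + E') / (h * E') := by positivity
    have hs : cs ^ 2 = θ * (1 + E') / (h * E') :=
      Real.sq_sqrt harg
    rw [hs]
    field_simp
  have hcs : (0:ℝ) < cs := Real.sqrt_pos.mpr (by positivity)
  have h1E : (1:ℝ) + E' ≠ 0 := by positivity
  clear_value γ cs
  have relB : cs * cs⁻¹ = 1 := mul_inv_cancel₀ hcs.ne'
  have relC : h * h⁻¹ = 1 := mul_inv_cancel₀ hh.ne'
  have relD : (1 + E') * (1 + E')⁻¹ = 1 := mul_inv_cancel₀ h1E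
  have relE : E' * E'⁻¹ = 1 := mul_inv_cancel₀ hE.ne'
  have relW : (1 - v ^ 2) * (1 - v ^ 2)⁻¹ = 1 := mul_inv_cancel₀ h1.ne'
  have hD2 : D = !![γ * ρ * E' * (1 + E')⁻¹ * (1/2) - γ * ρ * θ * v * cs⁻¹ * h⁻¹ * (1/2), 0, 0;
      0, ρ * γ * (1 + E')⁻¹, 0;
      0, 0, γ * ρ * E' * (1 + E')⁻¹ * (1/2) + γ * ρ * θ * v * cs⁻¹ * h⁻¹ * (1/2)] := by
    ext i j
    fin_cases i <;> fin_cases j <;>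
        simp [D, Matrix.diagonal, Matrix.vecHead, Matrix.vecTail] <;>
      field_simp [hcs.ne', hh.ne', h1E] <;> ring
  have hRT : Rᵀ = !![(1:ℝ), (v - cs) * h * γ, (1 - v * cs) * h * γ;
      1, (h - θ * (1 + E')) * γ * v, (h - θ * (1 + E')) * γ;
      1, (v + cs) * h * γ, (1 + v * cs) * h * γ] := by
    ext i j
    fin_cases i <;> fin_cases j <;> simp [R, Matrix.vecHead, Matrix.vecTail]
  have hR0 : R = !![1, 1, 1;
      (v - cs) * h * γ, (h - θ * (1 + E')) * γ * v, (v + cs) * h * γ;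
      (1 - v * cs) * h * γ, (h - θ * (1 + E')) * γ, (1 + v * cs) * h * γ] := rfl
  rw [hD2, hRT, hR0, Matrix.mul_fin_three, Matrix.mul_fin_three]
  ext i j
  fin_cases i <;> fin_cases j <;>
    simp [M, Matrix.vecHead, Matrix.vecTail, -one_div]
  · linear_combination ((0 : ℝ)) * key1 + ((0 : ℝ)) * key2 + ((0 : ℝ)) * relB + ((0 : ℝ)) * relC + ((0 : ℝ) + (1 : ℝ) * ρ * γ) * relD + ((0 : ℝ)) * relE + ((0 : ℝ)) * relW
  · linear_combination ((0 : ℝ)) * key1 + ((0 : ℝ)) * key2 + ((0 : ℝ) + (1 : ℝ) * ρ * θ * h * v * γ ^ 2 * h⁻¹) * relB + ((0 : ℝ) + (1 : ℝ) * ρ * θ * v * γ ^ 2) * relC + ((0 : ℝ) + (1 : ℝ) * ρ * h * v * γ ^ 2 + (-1 : ℝ) * ρ * θ * v * γ ^ 2) * relD + ((0 : ℝ)) * relE + ((0 : ℝ)) * relW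
  · linear_combination ((0 : ℝ)) * key1 + ((0 : ℝ) + (-1 : ℝ) * ρ * θ * (1 - v ^ 2)⁻¹ + (1 : ℝ) * ρ * θ * v ^ 2 * (1 - v ^ 2)⁻¹) * key2 + ((0 : ℝ) + (1 : ℝ) * ρ * θ * h * v ^ 2 * γ ^ 2 * h⁻¹) * relB + ((0 : ℝ) + (1 : ℝ) * ρ * θ * v ^ 2 * γ ^ 2) * relC + ((0 : ℝ) + (1 : ℝ) * ρ * h * γ ^ 2 + (-1 : ℝ) * ρ * θ * γ ^ 2) * relD + ((0 : ℝ)) * relE + ((0 : ℝ) + (-1 : ℝ) * ρ * θ + (1 : ℝ) * ρ * θ * γ ^ 2 + (-1 : ℝ) * ρ * θ * v ^ 2 * γ ^ 2) * relW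
  · linear_combination ((0 : ℝ)) * key1 + ((0 : ℝ)) * key2 + ((0 : ℝ) + (1 : ℝ) * ρ * θ * h * v * γ ^ 2 * h⁻¹) * relB + ((0 : ℝ) + (1 : ℝ) * ρ * θ * v * γ ^ 2) * relC + ((0 : ℝ) + (1 : ℝ) * ρ * h * v * γ ^ 2 + (-1 : ℝ) * ρ * θ * v * γ ^ 2) * relD + ((0 : ℝ)) * relE + ((0 : ℝ)) * relW
  · linear_combination ((0 : ℝ) + (1 : ℝ) * ρ * h ^ 2 * γ ^ 3 * h⁻¹ * E'⁻¹ + (-1 : ℝ) * ρ * h ^ 2 * γ ^ 3 * h⁻¹ * (1 + E')⁻¹ * E'⁻¹) * key1 + ((0 : ℝ)) * key2 + ((0 : ℝ) + (2 : ℝ) * ρ * θ * h ^ 2 * v ^ 2 * γ ^ 3 * h⁻¹) * relB + ((0 : ℝ) + (-1 : ℝ) * ρ * h ^ 2 * E' * cs ^ 2 * γ ^ 3 * E'⁻¹ + (1 : ℝ) * ρ * h ^ 2 * E' * cs ^ 2 * γ ^ 3 * (1 + E')⁻¹ * E'⁻¹ + (1 : ℝ) * ρ * θ * h * γ ^ 3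 * E'⁻¹ + (-1 : ℝ) * ρ * θ * h * γ ^ 3 * (1 + E')⁻¹ * E'⁻¹ + (2 : ℝ) * ρ * θ * h * v ^ 2 * γ ^ 3 + (1 : ℝ) * ρ * θ * h * E' * γ ^ 3 * E'⁻¹ + (-1 : ℝ) * ρ * θ * h * E' * γ ^ 3 * (1 + E')⁻¹ * E'⁻¹) * relC + ((0 : ℝ) + (1 : ℝ) * ρ * h ^ 2 * cs ^ 2 * γ ^ 3 + (1 : ℝ) * ρ * h ^ 2 * v ^ 2 * γ ^ 3 + (-1 : ℝ) * ρ * θ * h * γ ^ 3 * E'⁻¹ + (-2 : ℝ) * ρ * θ * h * v ^ 2 * γ ^ 3 + (1 : ℝ) * ρ * θ ^ 2 * v ^ 2 * γ ^ 3 + (1 : ℝ) * ρ * θ ^ 2 * E' * v ^ 2 * γ ^ 3) * relD + ((0 : ℝ) + (-1 : ℝ) * ρ * h ^ 2 * cs ^ 2 * γ ^ 3 + (1 : ℝ) * ρ * h ^ 2 * cs ^ 2 * γ ^ 3 * (1 + E')⁻¹ + (1 : ℝ) * ρ * θ * h * γ ^ 3) * relE + ((0 : ℝ)) * relW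
  · linear_combination ((0 : ℝ) + (1 : ℝ) * ρ * h ^ 2 * v * γ ^ 3 * h⁻¹ * E'⁻¹ + (-1 : ℝ) * ρ * h ^ 2 * v * γ ^ 3 * h⁻¹ * (1 + E')⁻¹ * E'⁻¹) * key1 + ((0 : ℝ)) * key2 + ((0 : ℝ) + (1 : ℝ) * ρ * θ * h ^ 2 * v * γ ^ 3 * h⁻¹ + (1 : ℝ) * ρ * θ * h ^ 2 * v ^ 3 * γ ^ 3 * h⁻¹) * relB + ((0 : ℝ) + (-1 : ℝ) * ρ * h ^ 2 * E' * v * cs ^ 2 * γ ^ 3 * E'⁻¹ + (1 : ℝ) * ρ * h ^ 2 * E' * v * cs ^ 2 * γ ^ 3 * (1 + E')⁻¹ * E'⁻¹ + (1 : ℝ) * ρ * θ * h * v * γ ^ 3 + (1 : ℝ) * ρ * θ * h * v * γ ^ 3 * E'⁻¹ + (-1 : ℝ) * ρ * θ * h * v * γ ^ 3 * (1 + E')⁻¹ * E'⁻¹ + (1 : ℝ) * ρ * θ * h * v ^ 3 * γ ^ 3 + (1 : ℝ) * ρ * θ * h * E' * v * γ ^ 3 * E'⁻¹ + (-1 : ℝ)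 * ρ * θ * h * E' * v * γ ^ 3 * (1 + E')⁻¹ * E'⁻¹) * relC + ((0 : ℝ) + (1 : ℝ) * ρ * h ^ 2 * v * γ ^ 3 + (1 : ℝ) * ρ * h ^ 2 * v * cs ^ 2 * γ ^ 3 + (-2 : ℝ) * ρ * θ * h * v * γ ^ 3 + (-1 : ℝ) * ρ * θ * h * v * γ ^ 3 * E'⁻¹ + (1 : ℝ) * ρ * θ ^ 2 * v * γ ^ 3 + (1 : ℝ) * ρ * θ ^ 2 * E' * v * γ ^ 3) * relD + ((0 : ℝ) + (-1 : ℝ) * ρ * h ^ 2 * v * cs ^ 2 * γ ^ 3 + (1 : ℝ) * ρ * h ^ 2 * v * cs ^ 2 * γ ^ 3 * (1 + E')⁻¹ + (1 : ℝ) * ρ * θ * h * v * γ ^ 3) * relE + ((0 : ℝ)) * relW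
  · linear_combination ((0 : ℝ)) * key1 + ((0 : ℝ) + (-1 : ℝ) * ρ * θ * (1 - v ^ 2)⁻¹ + (1 : ℝ) * ρ * θ * v ^ 2 * (1 - v ^ 2)⁻¹) * key2 + ((0 : ℝ) + (1 : ℝ) * ρ * θ * h * v ^ 2 * γ ^ 2 * h⁻¹) * relB + ((0 : ℝ) + (1 : ℝ) * ρ * θ * v ^ 2 * γ ^ 2) * relC + ((0 : ℝ) + (1 : ℝ) * ρ * h * γ ^ 2 + (-1 : ℝ) * ρ * θ * γ ^ 2) * relD + ((0 : ℝ)) * relE + ((0 : ℝ) + (-1 : ℝ) * ρ * θ + (1 : ℝ) * ρ * θ * γ ^ 2 + (-1 : ℝ) * ρ * θ * v ^ 2 * γ ^ 2) * relW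
  · linear_combination ((0 : ℝ) + (1 : ℝ) * ρ * h ^ 2 * v * γ ^ 3 * h⁻¹ * E'⁻¹ + (-1 : ℝ) * ρ * h ^ 2 * v * γ ^ 3 * h⁻¹ * (1 + E')⁻¹ * E'⁻¹) * key1 + ((0 : ℝ)) * key2 + ((0 : ℝ) + (1 : ℝ) * ρ * θ * h ^ 2 * v * γ ^ 3 * h⁻¹ + (1 : ℝ) * ρ * θ * h ^ 2 * v ^ 3 * γ ^ 3 * h⁻¹) * relB + ((0 : ℝ) + (-1 : ℝ) * ρ * h ^ 2 * E' * v * cs ^ 2 * γ ^ 3 * E'⁻¹ + (1 : ℝ) * ρ * h ^ 2 * E' * v * cs ^ 2 * γ ^ 3 * (1 + E')⁻¹ * E'⁻¹ + (1 : ℝ) * ρ * θ * h * v * γ ^ 3 + (1 : ℝ) * ρ * θ * h * v * γ ^ 3 * E'⁻¹ + (-1 : ℝ) * ρ * θ * h * v * γ ^ 3 * (1 + E')⁻¹ * E'⁻¹ + (1 : ℝ) * ρ * θ * h * v ^ 3 * γ ^ 3 + (1 : ℝ) * ρ * θ * h * E' * v * γ ^ 3 * E'⁻¹ + (-1 : ℝ)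 * ρ * θ * h * E' * v * γ ^ 3 * (1 + E')⁻¹ * E'⁻¹) * relC + ((0 : ℝ) + (1 : ℝ) * ρ * h ^ 2 * v * γ ^ 3 + (1 : ℝ) * ρ * h ^ 2 * v * cs ^ 2 * γ ^ 3 + (-2 : ℝ) * ρ * θ * h * v * γ ^ 3 + (-1 : ℝ) * ρ * θ * h * v * γ ^ 3 * E'⁻¹ + (1 : ℝ) * ρ * θ ^ 2 * v * γ ^ 3 + (1 : ℝ) * ρ * θ ^ 2 * E' * v * γ ^ 3) * relD + ((0 : ℝ) + (-1 : ℝ) * ρ * h ^ 2 * v * cs ^ 2 * γ ^ 3 + (1 : ℝ) * ρ * h ^ 2 * v * cs ^ 2 * γ ^ 3 * (1 + E')⁻¹ + (1 : ℝ) * ρ * θ * h * v * γ ^ 3) * relE + ((0 : ℝ)) * relW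
  · linear_combination ((0 : ℝ) + (1 : ℝ) * ρ * h ^ 2 * v ^ 2 * γ ^ 3 * h⁻¹ * E'⁻¹ + (-1 : ℝ) * ρ * h ^ 2 * v ^ 2 * γ ^ 3 * h⁻¹ * (1 + E')⁻¹ * E'⁻¹) * key1 + ((0 : ℝ)) * key2 + ((0 : ℝ) + (2 : ℝ) * ρ * θ * h ^ 2 * v ^ 2 * γ ^ 3 * h⁻¹) * relB + ((0 : ℝ) + (-1 : ℝ) * ρ * h ^ 2 * E' * v ^ 2 * cs ^ 2 * γ ^ 3 * E'⁻¹ + (1 : ℝ) * ρ * h ^ 2 * E' * v ^ 2 * cs ^ 2 * γ ^ 3 * (1 + E')⁻¹ * E'⁻¹ + (2 : ℝ) * ρ * θ * h * v ^ 2 * γ ^ 3 + (1 : ℝ) * ρ * θ * h * v ^ 2 * γ ^ 3 * E'⁻¹ + (-1 : ℝ) * ρ * θ * h * v ^ 2 * γ ^ 3 * (1 + E')⁻¹ * E'⁻¹ + (1 : ℝ) * ρ * θ * h * E' * v ^ 2 * γ ^ 3 * E'⁻¹ + (-1 : ℝ) * ρ * θ * h * E' * v ^ 2 * γ ^ 3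 * (1 + E')⁻¹ * E'⁻¹) * relC + ((0 : ℝ) + (1 : ℝ) * ρ * h ^ 2 * γ ^ 3 + (1 : ℝ) * ρ * h ^ 2 * v ^ 2 * cs ^ 2 * γ ^ 3 + (-2 : ℝ) * ρ * θ * h * γ ^ 3 + (-1 : ℝ) * ρ * θ * h * v ^ 2 * γ ^ 3 * E'⁻¹ + (1 : ℝ) * ρ * θ ^ 2 * γ ^ 3 + (1 : ℝ) * ρ * θ ^ 2 * E' * γ ^ 3) * relD + ((0 : ℝ) + (-1 : ℝ) * ρ * h ^ 2 * v ^ 2 * cs ^ 2 * γ ^ 3 + (1 : ℝ) * ρ * h ^ 2 * v ^ 2 * cs ^ 2 * γ ^ 3 * (1 + E')⁻¹ + (1 : ℝ) * ρ * θ * h * v ^ 2 * γ ^ 3) * relE + ((0 : ℝ)) * relW
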